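/- If an integer of the form d²·m (with d, m positive integers) is a sum of three squares of integers, then m is also a sum of three squares of integers. -/

import Mathlib

/-!
Davenport–Cassels descent. Write `q v = v ⬝ᵥ v`. If `N² m = q x` with `N > 1`, round `x / N` to a
lattice point `y`; in at most three dimensions `q (x - N • y) < N²`. Unless `x = N • y` (and then
`m = q y`), the line through `y` and `x / N` meets the sphere `q = m` again at a rational point whose
denominator `n` satisfies `N * n = q (x - N • y)`, so `0 < n < N` and we descend on `N`.
-/

open Matrix

lemma Int.exists_four_mul_sq_sub_mul_le_sq (x : ℤ) {N : ℤ} (hN : 0 < N) :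
    ∃ y : ℤ, 4 * (x - N * y) ^ 2 ≤ N ^ 2 := by
  have h0 : 0 ≤ x % N := Int.emod_nonneg x hN.ne'
  have h1 : x % N < N := Int.emod_lt_of_pos x hN
  rcases le_or_gt (2 * (x % N)) N with hle | hlt
  · refine ⟨x / N, ?_⟩
    rw [← Int.emod_def]
    nlinarith
  · refine ⟨x / N + 1, ?_⟩
    rw [mul_add, mul_one, ← sub_sub, ← Int.emod_def]
    nlinarith

section Descent

variable {k : ℕ}

lemma exists_dotProduct_self_sub_smul_lt (hk : k ≤ 3) (x : Fin k → ℤ) {N : ℤ} (hN : 0 < N) :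
    ∃ y : Fin k → ℤ, (x - N • y) ⬝ᵥ (x - N • y) < N ^ 2 := by
  choose y hy using fun i ↦ (x i).exists_four_mul_sq_sub_mul_le_sq hN
  refine ⟨y, ?_⟩
  have : 4 * ((x - N • y) ⬝ᵥ (x - N • y)) ≤ k * N ^ 2 := by
    simpa [dotProduct, Finset.mul_sum, ← sq] using
      Finset.sum_le_sum (s := Finset.univ) fun i _ ↦ hy i
  have hk' : (k : ℤ) ≤ 3 := by exact_mod_cast hk
  nlinarith

/-- The second intersection point is `(a • x + b • y) / (a * N + b)`. -/
lemma davenport_cassels_identities {N m : ℤ} {x : Fin k → ℤ} (h : N ^ 2 * m = x ⬝ᵥ x)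
    (y : Fin k → ℤ) :
    let a := y ⬝ᵥ y - m
    let b := 2 * (N * m - x ⬝ᵥ y)
    N * (a * N + b) = (x - N • y) ⬝ᵥ (x - N • y) ∧
      (a * N + b) ^ 2 * m = (a • x + b • y) ⬝ᵥ (a • x + b • y) := by
  intro a b
  simp only [sub_dotProduct, dotProduct_sub, add_dotProduct, dotProduct_add, smul_dotProduct,
    dotProduct_smul, dotProduct_comm y x, smul_eq_mul]
  constructor
  · linear_combination h
  · linear_combination a ^ 2 * h

lemma descent_step (hk : k ≤ 3) {N : ℕ} (hN : 0 < N) {m : ℤ} {x : Fin k → ℤ}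
    (h : (N : ℤ) ^ 2 * m = x ⬝ᵥ x) :
    (∃ y : Fin k → ℤ, m = y ⬝ᵥ y) ∨
      ∃ n : ℕ, 0 < n ∧ n < N ∧ ∃ x' : Fin k → ℤ, (n : ℤ) ^ 2 * m = x' ⬝ᵥ x' := by
  have hN' : (0 : ℤ) < N := by exact_mod_cast hN
  obtain ⟨y, hy⟩ := exists_dotProduct_self_sub_smul_lt hk x hN'
  obtain ⟨hr, hx'⟩ := davenport_cassels_identities h y
  set n := (y ⬝ᵥ y - m) * N + 2 * (N * m - x ⬝ᵥ y)
  by_cases hxy : x = (N : ℤ) • y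
  · left
    refine ⟨y, mul_left_cancel₀ (pow_ne_zero 2 hN'.ne') ?_⟩
    rw [h, hxy, smul_dotProduct, dotProduct_smul, smul_eq_mul, smul_eq_mul]
    ring
  · right
    have hpos : 0 < (x - (N : ℤ) • y) ⬝ᵥ (x - (N : ℤ) • y) :=
      (Finset.sum_nonneg fun i _ ↦ mul_self_nonneg _).lt_of_ne
        (Ne.symm <| mt dotProduct_self_eq_zero.mp <| sub_ne_zero.mpr hxy)
    have hn : 0 < n := pos_of_mul_pos_right (hr ▸ hpos) hN'.le
    lift n to ℕ using hn.le with n'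
    refine ⟨n', by exact_mod_cast hn, ?_, _, hx'⟩
    have : (N : ℤ) * n' < N * N := by rw [hr, ← sq]; exact hy
    exact_mod_cast lt_of_mul_lt_mul_left this hN'.le

lemma exists_eq_dotProduct_self_of_sq_mul_eq (hk : k ≤ 3) {N : ℕ} (hN : 0 < N) {m : ℤ}
    {x : Fin k → ℤ} (h : (N : ℤ) ^ 2 * m = x ⬝ᵥ x) : ∃ y : Fin k → ℤ, m = y ⬝ᵥ y := by
  induction N using Nat.strong_induction_on generalizing x with
  | _ N ih =>
    obtain hm | ⟨n, hn, hnN, x', hx'⟩ := descent_step hk hN h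
    · exact hm
    · exact ih n hnN hn hx'

end Descent

theorem sum_three_squares_descent (d m : ℕ) (hd : 0 < d)
    (x y z : ℤ) (h : (d : ℤ)^2 * m = x^2 + y^2 + z^2) :
    ∃ a b c : ℤ, (m : ℤ) = a^2 + b^2 + c^2 := by
  have h' : (d : ℤ) ^ 2 * m = ![x, y, z] ⬝ᵥ ![x, y, z] := by
    rw [h]; simp [dotProduct, Fin.sum_univ_three, sq]
  obtain ⟨v, hv⟩ := exists_eq_dotProduct_self_of_sq_mul_eq le_rfl hd h'
  exact ⟨v 0, v 1, v 2, by simp [hv, dotProduct, Fin.sum_univ_three, sq]⟩
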